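/- arXiv:1404.1312 — 3 statements merged into one kernel-verified Lean document; each statement's English description precedes it below -/
import Mathlib

section
/- Let ω = e^{2πi/3}. A nonzero, non-unit element ϱ of the Eisenstein integers ℤ[ω] is prime if and only if exactly one of the following mutually exclusive conditions holds: (1) ϱ equals the product of a unit of ℤ[ω] and a natural prime p with p ≡ 2 (mod 3); (2) |ϱ|² = 3, or |ϱ|² is a natural prime congruent to 1 (mod 3). -/
/-- ω = e^{2πi/3} = -1/2 + i√3/2. -/
noncomputable def eisω : ℂ := -1/2 + (Real.sqrt 3 / 2) * Complex.I

/-- The ring of Eisenstein integers ℤ[ω], as a subring of ℂ. -/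
noncomputable def Eis : Subring ℂ := Subring.closure {eisω}

/-!
`ℤ[ω]` is norm-Euclidean: rounding the `ω`-coordinates of `a / b` leaves an error of norm at
most `3 / 4`. So its primes are its irreducibles, and a prime `ϱ`, dividing `N(ϱ) = ϱ ϱ̄`,
divides some rational prime `p`, whence `N(ϱ) ∈ {p, p²}`. If `N(ϱ) = p`, then `p ≢ 2 (mod 3)`
because `a² - ab + b²` is never `2` mod `3`; if `N(ϱ) = p²`, then `ϱ` is associated to `p`.
Finally a rational prime `p ≡ 2 (mod 3)` stays prime because nothing has norm `p`, while for
`p = 3` or `p ≡ 1 (mod 3)` there is `t` with `p ∣ t² + 3 = (t + √-3)(t - √-3)`, and `p` divides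
neither factor.
-/

lemma eisω_sq : eisω ^ 2 = -1 - eisω := by
  apply Complex.ext <;> simp [eisω, pow_two] <;>
    nlinarith [Real.sq_sqrt (show (0 : ℝ) ≤ 3 by norm_num)]

lemma normSq_add_mul_eisω (a b : ℝ) :
    Complex.normSq (a + b * eisω) = a ^ 2 - a * b + b ^ 2 := by
  simp [Complex.normSq_apply, eisω]
  nlinarith [Real.sq_sqrt (show (0 : ℝ) ≤ 3 by norm_num)]

namespace Eis

noncomputable def ω : Eis := ⟨eisω, Subring.subset_closure rfl⟩

@[simp, norm_cast] lemma coe_ω : ((ω : Eis) : ℂ) = eisω := rfl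

lemma ω_sq : ω ^ 2 = -1 - ω := Subtype.ext (by push_cast; exact eisω_sq)

lemma exists_eq_add_mul_ω (x : Eis) : ∃ a b : ℤ, x = a + b * ω := by
  obtain ⟨z, hz⟩ := x
  suffices h : ∃ a b : ℤ, z = a + b * eisω by
    obtain ⟨a, b, h⟩ := h
    exact ⟨a, b, Subtype.ext (by push_cast; exact h)⟩
  induction hz using Subring.closure_induction with
  | mem z hz => exact ⟨0, 1, by simp [Set.mem_singleton_iff.mp hz]⟩
  | zero => exact ⟨0, 0, by simp⟩
  | one => exact ⟨1, 0, by simp⟩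
  | add z w _ _ hz hw =>
    obtain ⟨a, b, rfl⟩ := hz
    obtain ⟨c, d, rfl⟩ := hw
    exact ⟨a + c, b + d, by push_cast; ring⟩
  | neg z _ hz =>
    obtain ⟨a, b, rfl⟩ := hz
    exact ⟨-a, -b, by push_cast; ring⟩
  | mul z w _ _ hz hw =>
    obtain ⟨a, b, rfl⟩ := hz
    obtain ⟨c, d, rfl⟩ := hw
    exact ⟨a * c - b * d, a * d + b * c - b * d, by
      push_cast; linear_combination (b * d : ℂ) * eisω_sq⟩

lemma normSq_add_mul_ω (a b : ℤ) :
    Complex.normSq ((a + b * ω : Eis) : ℂ) = ((a ^ 2 - a * b + b ^ 2 : ℤ) : ℝ) := by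
  have := normSq_add_mul_eisω a b
  push_cast at this ⊢
  exact this

-- `normSq` is integer-valued on `Eis` (`natCast_natNorm`), so the floor loses nothing.
noncomputable def natNorm (x : Eis) : ℕ := ⌊Complex.normSq (x : ℂ)⌋₊

lemma natCast_natNorm (x : Eis) : (natNorm x : ℝ) = Complex.normSq (x : ℂ) := by
  obtain ⟨a, b, rfl⟩ := exists_eq_add_mul_ω x
  obtain ⟨n, hn⟩ : ∃ n : ℕ, a ^ 2 - a * b + b ^ 2 = n :=
    Int.eq_ofNat_of_zero_le (by nlinarith [sq_nonneg (a - b), sq_nonneg a, sq_nonneg b])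
  rw [natNorm, normSq_add_mul_ω, hn, Int.cast_natCast, Nat.floor_natCast]

lemma natNorm_add_mul_ω (a b : ℤ) : (natNorm (a + b * ω) : ℤ) = a ^ 2 - a * b + b ^ 2 := by
  exact_mod_cast (natCast_natNorm _).trans (normSq_add_mul_ω a b)

lemma natNorm_mul (x y : Eis) : natNorm (x * y) = natNorm x * natNorm y := by
  rw [← Nat.cast_inj (R := ℝ)]
  push_cast [natCast_natNorm]
  exact Complex.normSq_mul _ _

lemma natNorm_eq_zero {x : Eis} : natNorm x = 0 ↔ x = 0 := by
  rw [← Nat.cast_inj (R := ℝ), natCast_natNorm, Nat.cast_zero, Complex.normSq_eq_zero,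
    ZeroMemClass.coe_eq_zero]

lemma natNorm_natCast (n : ℕ) : natNorm n = n ^ 2 := by
  rw [← Nat.cast_inj (R := ℝ), natCast_natNorm]
  simp [Complex.normSq_apply, sq]

lemma natNorm_dvd_natNorm {x y : Eis} (h : x ∣ y) : natNorm x ∣ natNorm y := by
  obtain ⟨c, rfl⟩ := h
  exact ⟨natNorm c, natNorm_mul x c⟩

lemma dvd_natNorm (x : Eis) : x ∣ (natNorm x : Eis) := by
  obtain ⟨a, b, rfl⟩ := exists_eq_add_mul_ω x
  refine ⟨a - b - b * ω, ?_⟩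
  rw [← Int.cast_natCast, natNorm_add_mul_ω]
  push_cast
  linear_combination (b : Eis) ^ 2 * ω_sq

lemma isUnit_iff_natNorm_eq_one {x : Eis} : IsUnit x ↔ natNorm x = 1 := by
  refine ⟨fun hx => ?_, fun hx => isUnit_of_dvd_one (by simpa [hx] using dvd_natNorm x)⟩
  have h := natNorm_dvd_natNorm (isUnit_iff_dvd_one.mp hx)
  rwa [← Nat.cast_one, natNorm_natCast, one_pow, Nat.dvd_one] at h

lemma natNorm_mod_three_ne_two (x : Eis) : natNorm x % 3 ≠ 2 := by
  obtain ⟨a, b, rfl⟩ := exists_eq_add_mul_ω x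
  have hsq : ∀ a b : ZMod 3, a ^ 2 - a * b + b ^ 2 ≠ 2 := by decide
  intro h
  apply hsq a b
  have := congrArg (fun n : ℤ => (n : ZMod 3)) (natNorm_add_mul_ω a b)
  push_cast at this
  rw [← this, ← ZMod.natCast_mod, h]
  rfl

-- `z = u + v ω` with `v = 2 Im z / √3` and `u = Re z + Im z / √3`; round `u` and `v`.
noncomputable def nearest (z : ℂ) : Eis :=
  round (z.re + z.im / Real.sqrt 3) + round (2 * z.im / Real.sqrt 3) * ω

lemma normSq_sub_nearest_le (z : ℂ) : Complex.normSq (z - nearest z) ≤ 3 / 4 := by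
  set u := z.re + z.im / Real.sqrt 3
  set v := 2 * z.im / Real.sqrt 3
  have hsub : z - nearest z = ((u - round u : ℝ) : ℂ) + ((v - round v : ℝ) : ℂ) * eisω := by
    apply Complex.ext <;> simp [nearest, eisω, u, v] <;> field_simp
    ring
  rw [hsub, normSq_add_mul_eisω]
  have hu := abs_le.mp (abs_sub_round u)
  have hv := abs_le.mp (abs_sub_round v)
  nlinarith [sq_nonneg (u - round u + (v - round v)), sq_nonneg (u - round u - (v - round v))]

lemma natNorm_sub_mul_nearest_lt (a : Eis) {b : Eis} (hb : b ≠ 0) :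
    natNorm (a - b * nearest (a / b)) < natNorm b := by
  have hb' : (b : ℂ) ≠ 0 := by exact_mod_cast hb
  have hrem : ((a - b * nearest (a / b) : Eis) : ℂ) = b * (a / b - nearest (a / b)) := by
    push_cast
    field_simp
  have hpos := Complex.normSq_pos.mpr hb'
  have hle := normSq_sub_nearest_le (a / b)
  rw [← Nat.cast_lt (α := ℝ), natCast_natNorm, natCast_natNorm, hrem, Complex.normSq_mul]
  nlinarith

noncomputable instance : EuclideanDomain Eis where
  quotient a b := nearest (a / b)
  quotient_zero a := by simp [nearest]
  remainder a b := a - b * nearest (a / b)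
  quotient_mul_add_remainder_eq a b := by ring
  r a b := natNorm a < natNorm b
  r_wellFounded := InvImage.wf natNorm wellFounded_lt
  remainder_lt a b hb := natNorm_sub_mul_nearest_lt a hb
  mul_left_not_lt a b hb := by
    rw [natNorm_mul, not_lt]
    exact Nat.le_mul_of_pos_right _ (Nat.pos_of_ne_zero (mt natNorm_eq_zero.mp hb))

lemma prime_of_prime_natNorm {x : Eis} (hx : (natNorm x).Prime) : Prime x := by
  refine Irreducible.prime
    ⟨fun hu => hx.ne_one (isUnit_iff_natNorm_eq_one.mp hu), fun a b hab => ?_⟩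
  rw [hab, natNorm_mul, Nat.prime_mul_iff] at hx
  simp only [isUnit_iff_natNorm_eq_one]
  tauto

lemma prime_natCast_of_mod_three_eq_two {p : ℕ} (hp : p.Prime) (h2 : p % 3 = 2) :
    Prime (p : Eis) := by
  refine Irreducible.prime ⟨fun hu => ?_, fun a b hab => ?_⟩
  · have := isUnit_iff_natNorm_eq_one.mp hu
    rw [natNorm_natCast] at this
    exact (Nat.one_lt_pow two_ne_zero hp.one_lt).ne' this
  · have hnorm : natNorm a * natNorm b = p ^ 2 := by rw [← natNorm_mul, ← hab, natNorm_natCast]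
    obtain ⟨i, hi, ha⟩ := (Nat.dvd_prime_pow hp).mp (Dvd.intro _ hnorm)
    simp only [isUnit_iff_natNorm_eq_one]
    interval_cases i
    · exact Or.inl ha
    · exact absurd (by rw [ha, pow_one, h2]) (natNorm_mod_three_ne_two a)
    · rw [ha] at hnorm
      exact Or.inr (Nat.mul_eq_left (pow_ne_zero 2 hp.ne_zero) |>.mp hnorm)

lemma exists_sq_add_three_dvd {p : ℕ} (hp : p.Prime) (h : p % 3 ≠ 2) :
    ∃ t : ℤ, (p : ℤ) ∣ t ^ 2 + 3 := by
  obtain h0 | h1 : p % 3 = 0 ∨ p % 3 = 1 := by omega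
  · obtain rfl : p = 3 :=
      ((Nat.prime_dvd_prime_iff_eq Nat.prime_three hp).mp (Nat.dvd_of_mod_eq_zero h0)).symm
    exact ⟨0, by norm_num⟩
  have := Fact.mk hp
  obtain ⟨g, hg⟩ := exists_prime_orderOf_dvd_card (G := (ZMod p)ˣ) 3
    (by rw [ZMod.card_units]; omega)
  -- for a primitive cube root of unity `g` mod `p`, `(2 g + 1) ^ 2 = 4 (g ^ 2 + g + 1) - 3 = -3`
  have hζ : IsPrimitiveRoot (g : ZMod p) 3 := by
    rw [← hg, ← orderOf_units]
    exact IsPrimitiveRoot.orderOf _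
  have hsum := hζ.geom_sum_eq_zero (by norm_num)
  simp only [Finset.sum_range_succ, Finset.sum_range_zero] at hsum
  obtain ⟨t, ht⟩ := ZMod.intCast_surjective (2 * (g : ZMod p) + 1)
  refine ⟨t, (ZMod.intCast_zmod_eq_zero_iff_dvd _ p).mp ?_⟩
  push_cast
  rw [ht]
  linear_combination 4 * hsum

lemma natCast_dvd_of_dvd_add_mul_ω {n : ℕ} {a b : ℤ} (h : (n : Eis) ∣ a + b * ω) :
    (n : ℤ) ∣ b := by
  obtain ⟨y, hy⟩ := h
  obtain ⟨c, d, rfl⟩ := exists_eq_add_mul_ω y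
  refine ⟨d, ?_⟩
  have him := congrArg (fun z : Eis => (z : ℂ).im) hy
  have hs : Real.sqrt 3 / 2 ≠ 0 := by positivity
  simp [eisω] at him
  exact_mod_cast mul_right_cancel₀ hs (him.trans (mul_assoc _ _ _).symm)

lemma not_prime_natCast_of_mod_three_ne_two {p : ℕ} (hp : p.Prime) (h : p % 3 ≠ 2) :
    ¬ Prime (p : Eis) := by
  intro hpr
  obtain ⟨t, k, hk⟩ := exists_sq_add_three_dvd hp h
  have hk' : (t : Eis) ^ 2 + 3 = p * k := by exact_mod_cast congrArg (Int.cast : ℤ → Eis) hk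
  -- `1 + 2ω` is a square root of `-3`, so `t ^ 2 + 3` splits over `Eis`
  have hfac : (p : Eis) ∣ (t + 1 + 2 * ω) * (t - 1 + -2 * ω) :=
    ⟨k, by linear_combination hk' - 4 * ω_sq⟩
  have hp2 : (p : ℤ) ∣ 2 := by
    rcases hpr.dvd_or_dvd hfac with h₁ | h₂
    · exact natCast_dvd_of_dvd_add_mul_ω (a := t + 1) (by exact_mod_cast h₁)
    · exact (dvd_neg).mp (natCast_dvd_of_dvd_add_mul_ω (a := t - 1) (by exact_mod_cast h₂))
  have := (Nat.prime_dvd_prime_iff_eq hp Nat.prime_two).mp (by exact_mod_cast hp2)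
  omega

lemma prime_natCast_iff {p : ℕ} (hp : p.Prime) : Prime (p : Eis) ↔ p % 3 = 2 :=
  ⟨not_imp_not.mp (not_prime_natCast_of_mod_three_ne_two hp),
    prime_natCast_of_mod_three_eq_two hp⟩

lemma exists_prime_dvd_natCast {x : Eis} (hx : Prime x) : ∃ p : ℕ, p.Prime ∧ x ∣ p := by
  have hn : natNorm x ≠ 0 := mt natNorm_eq_zero.mp hx.ne_zero
  have hdvd := dvd_natNorm x
  rw [← Nat.prod_primeFactorsList hn, Nat.cast_list_prod] at hdvd
  obtain ⟨_, hmem, hxq⟩ := hx.dvd_prod_iff.mp hdvd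
  obtain ⟨q, hq, rfl⟩ := List.mem_map.mp hmem
  exact ⟨q, Nat.prime_of_mem_primeFactorsList hq, hxq⟩

theorem prime_iff (x : Eis) :
    Prime x ↔
      (∃ u : Eis, ∃ p : ℕ, IsUnit u ∧ p.Prime ∧ p % 3 = 2 ∧ x = u * p) ∨ (natNorm x).Prime := by
  refine ⟨fun hx => ?_, ?_⟩
  · obtain ⟨p, hp, c, hc⟩ := exists_prime_dvd_natCast hx
    have hnorm : natNorm x * natNorm c = p ^ 2 := by rw [← natNorm_mul, ← hc, natNorm_natCast]
    obtain ⟨i, hi, hxi⟩ := (Nat.dvd_prime_pow hp).mp (Dvd.intro _ hnorm)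
    interval_cases i
    · exact absurd (isUnit_iff_natNorm_eq_one.mpr hxi) hx.not_isUnit
    · rw [pow_one] at hxi
      exact Or.inr (hxi ▸ hp)
    · rw [hxi] at hnorm
      have hcu : IsUnit c := isUnit_iff_natNorm_eq_one.mpr
        (Nat.mul_eq_left (pow_ne_zero 2 hp.ne_zero) |>.mp hnorm)
      have hxp : Associated x p := hc ▸ associated_mul_unit_right x c hcu
      obtain ⟨u, hu⟩ := hxp.symm
      exact Or.inl ⟨u, p, u.isUnit, hp, (prime_natCast_iff hp).mp (hxp.prime hx),
        by rw [← hu, mul_comm]⟩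
  · rintro (⟨u, p, hu, hp, h2, rfl⟩ | hx)
    · exact (associated_unit_mul_right _ u hu).prime (prime_natCast_of_mod_three_eq_two hp h2)
    · exact prime_of_prime_natNorm hx

lemma prime_natNorm_iff (x : Eis) :
    (natNorm x).Prime ↔ Complex.normSq (x : ℂ) = 3 ∨
      ∃ p : ℕ, Nat.Prime p ∧ p % 3 = 1 ∧ Complex.normSq (x : ℂ) = p := by
  rw [← natCast_natNorm]
  norm_cast
  refine ⟨fun hx => ?_, ?_⟩
  · obtain h0 | h1 : natNorm x % 3 = 0 ∨ natNorm x % 3 = 1 := by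
      have := natNorm_mod_three_ne_two x
      omega
    · exact Or.inl ((Nat.prime_dvd_prime_iff_eq Nat.prime_three hx).mp
        (Nat.dvd_of_mod_eq_zero h0)).symm
    · exact Or.inr ⟨_, hx, h1, rfl⟩
  · rintro (h | ⟨p, hp, -, h⟩)
    · exact h ▸ Nat.prime_three
    · exact h ▸ hp

end Eis

theorem stmt_12_general (ϱ : Eis) :
    Prime ϱ ↔
      Xor'
        (∃ u : Eis, ∃ p : ℕ, IsUnit u ∧ Nat.Prime p ∧ p % 3 = 2 ∧ ϱ = u * (p : Eis))
        (Complex.normSq (ϱ : ℂ) = 3 ∨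
          ∃ p : ℕ, Nat.Prime p ∧ p % 3 = 1 ∧ Complex.normSq (ϱ : ℂ) = p) := by
  rw [← Eis.prime_natNorm_iff, Eis.prime_iff]
  refine Iff.trans ?_ (xor_iff_or_and_not_and _ _).symm
  refine (and_iff_left ?_).symm
  rintro ⟨⟨u, p, hu, -, -, rfl⟩, hprime⟩
  rw [Eis.natNorm_mul, Eis.isUnit_iff_natNorm_eq_one.mp hu, one_mul, Eis.natNorm_natCast]
    at hprime
  exact Nat.Prime.not_prime_pow le_rfl hprime

/-- A nonzero, non-unit Eisenstein integer ϱ is prime iff exactly one of the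
following mutually exclusive conditions holds:
(1) ϱ is the product of a unit of ℤ[ω] and a natural prime p ≡ 2 (mod 3);
(2) |ϱ|² = 3, or |ϱ|² is a natural prime congruent to 1 (mod 3). -/
theorem stmt_12 (ϱ : Eis) (hne : ϱ ≠ 0) (hnu : ¬ IsUnit ϱ) :
    Prime ϱ ↔
      Xor'
        (∃ u : Eis, ∃ p : ℕ, IsUnit u ∧ Nat.Prime p ∧ p % 3 = 2 ∧ ϱ = u * (p : Eis))
        (Complex.normSq (ϱ : ℂ) = 3 ∨
          ∃ p : ℕ, Nat.Prime p ∧ p % 3 = 1 ∧ Complex.normSq (ϱ : ℂ) = p) :=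
  stmt_12_general ϱ
end

section
/- Let L ≥ 1, let h, a ∈ ℂ^L, and let P > 0 be real. Define ⟨h,a⟩ = Σ_{l=1}^L conj(h_l) a_l and ‖·‖ the Euclidean norm. Then for every α ∈ ℂ, |α|² + P‖αh − a‖² ≥ P(‖a‖² − P|⟨h,a⟩|²/(1 + P‖h‖²)), and equality holds for the MMSE coefficient α = P⟨h,a⟩/(1 + P‖h‖²). In particular the minimum over α ∈ ℂ of the effective noise variance |α|² + P‖αh − a‖² equals P(‖a‖² − P|⟨h,a⟩|²/(1 + P‖h‖²)). -/
/-! Completing the square in `α`: with `c = 1 + P‖h‖²`,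
`|α|² + P‖αh − a‖² = c |α − P⟨h,a⟩/c|² + P(‖a‖² − P|⟨h,a⟩|²/c)`,
so the effective noise variance is minimised exactly at the MMSE coefficient `P⟨h,a⟩/c`. -/

section CompletingTheSquare

variable {𝕜 E : Type*} [RCLike 𝕜] [NormedAddCommGroup E] [InnerProductSpace 𝕜 E]

local notation "⟪" x ", " y "⟫" => inner 𝕜 x y

theorem norm_sq_add_mul_norm_smul_sub_sq_eq {P : ℝ} (h a : E) (hc : 1 + P * ‖h‖ ^ 2 ≠ 0)
    (α : 𝕜) :
    ‖α‖ ^ 2 + P * ‖α • h - a‖ ^ 2 =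
      (1 + P * ‖h‖ ^ 2) * ‖α - P * ⟪h, a⟫ / (1 + P * ‖h‖ ^ 2 : ℝ)‖ ^ 2 +
        P * (‖a‖ ^ 2 - P * ‖⟪h, a⟫‖ ^ 2 / (1 + P * ‖h‖ ^ 2)) := by
  have hβ : (P : 𝕜) * ⟪h, a⟫ / ((1 + P * ‖h‖ ^ 2 : ℝ) : 𝕜) =
      ((P / (1 + P * ‖h‖ ^ 2) : ℝ) : 𝕜) * ⟪h, a⟫ := by
    push_cast
    ring
  rw [norm_sub_sq (𝕜 := 𝕜), norm_sub_sq (𝕜 := 𝕜), inner_smul_left, norm_smul, hβ, norm_mul,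
    RCLike.inner_apply, mul_assoc, RCLike.re_ofReal_mul, mul_comm ⟪h, a⟫,
    RCLike.norm_ofReal, mul_pow, mul_pow, sq_abs, div_pow]
  field_simp
  ring

theorem le_norm_sq_add_mul_norm_smul_sub_sq {P : ℝ} (hP : 0 ≤ P) (h a : E) (α : 𝕜) :
    P * (‖a‖ ^ 2 - P * ‖⟪h, a⟫‖ ^ 2 / (1 + P * ‖h‖ ^ 2)) ≤
      ‖α‖ ^ 2 + P * ‖α • h - a‖ ^ 2 := by
  have hc : 0 < 1 + P * ‖h‖ ^ 2 := by positivity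
  rw [norm_sq_add_mul_norm_smul_sub_sq_eq h a hc.ne']
  exact le_add_of_nonneg_left (by positivity)

theorem norm_sq_add_mul_norm_smul_sub_sq_mmse {P : ℝ} (h a : E) (hc : 1 + P * ‖h‖ ^ 2 ≠ 0) :
    ‖(P : 𝕜) * ⟪h, a⟫ / ((1 + P * ‖h‖ ^ 2 : ℝ) : 𝕜)‖ ^ 2 +
        P * ‖((P : 𝕜) * ⟪h, a⟫ / ((1 + P * ‖h‖ ^ 2 : ℝ) : 𝕜)) • h - a‖ ^ 2 =
      P * (‖a‖ ^ 2 - P * ‖⟪h, a⟫‖ ^ 2 / (1 + P * ‖h‖ ^ 2)) := by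
  rw [norm_sq_add_mul_norm_smul_sub_sq_eq h a hc, sub_self, norm_zero]
  ring

end CompletingTheSquare

theorem stmt_16_general (L : ℕ) (h a : Fin L → ℂ) (P : ℝ) (hP : 0 < P) :
    (∀ α : ℂ,
      P * ((∑ l, ‖a l‖ ^ 2) -
        P * ‖∑ l, (starRingEnd ℂ) (h l) * a l‖ ^ 2 /
          (1 + P * ∑ l, ‖h l‖ ^ 2)) ≤
      ‖α‖ ^ 2 + P * ∑ l, ‖α * h l - a l‖ ^ 2) ∧
    (‖(P : ℂ) * (∑ l, (starRingEnd ℂ) (h l) * a l) /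
          ((1 + P * ∑ l, ‖h l‖ ^ 2 : ℝ) : ℂ)‖ ^ 2 +
        P * ∑ l, ‖((P : ℂ) * (∑ l, (starRingEnd ℂ) (h l) * a l) /
          ((1 + P * ∑ l, ‖h l‖ ^ 2 : ℝ) : ℂ)) * h l - a l‖ ^ 2 =
      P * ((∑ l, ‖a l‖ ^ 2) -
        P * ‖∑ l, (starRingEnd ℂ) (h l) * a l‖ ^ 2 /
          (1 + P * ∑ l, ‖h l‖ ^ 2))) := by
  set x : EuclideanSpace ℂ (Fin L) := WithLp.toLp 2 h
  set y : EuclideanSpace ℂ (Fin L) := WithLp.toLp 2 a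
  have hx : ∑ l, ‖h l‖ ^ 2 = ‖x‖ ^ 2 := (EuclideanSpace.norm_sq_eq x).symm
  have hy : ∑ l, ‖a l‖ ^ 2 = ‖y‖ ^ 2 := (EuclideanSpace.norm_sq_eq y).symm
  have hxy : ∑ l, (starRingEnd ℂ) (h l) * a l = inner ℂ x y := by
    simp [x, y, PiLp.inner_apply, mul_comm]
  have hdist (α : ℂ) : ∑ l, ‖α * h l - a l‖ ^ 2 = ‖α • x - y‖ ^ 2 :=
    (EuclideanSpace.norm_sq_eq (α • x - y)).symm
  have hc : 1 + P * ‖x‖ ^ 2 ≠ 0 := by positivity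
  simp only [hx, hy, hxy, hdist]
  exact ⟨le_norm_sq_add_mul_norm_smul_sub_sq hP.le x y,
    norm_sq_add_mul_norm_smul_sub_sq_mmse x y hc⟩

/-- MMSE completion of squares in compute-and-forward: for h, a ∈ ℂ^L and P > 0,
every α ∈ ℂ satisfies
|α|² + P‖αh − a‖² ≥ P(‖a‖² − P|⟨h,a⟩|²/(1 + P‖h‖²)),
with equality for the MMSE coefficient α = P⟨h,a⟩/(1 + P‖h‖²); hence the
minimum over α of the effective noise variance equals the right-hand side. -/
theorem stmt_16 (L : ℕ) (hL : 1 ≤ L) (h a : Fin L → ℂ) (P : ℝ) (hP : 0 < P) :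
    (∀ α : ℂ,
      P * ((∑ l, ‖a l‖ ^ 2) -
        P * ‖∑ l, (starRingEnd ℂ) (h l) * a l‖ ^ 2 /
          (1 + P * ∑ l, ‖h l‖ ^ 2)) ≤
      ‖α‖ ^ 2 + P * ∑ l, ‖α * h l - a l‖ ^ 2) ∧
    (‖(P : ℂ) * (∑ l, (starRingEnd ℂ) (h l) * a l) /
          ((1 + P * ∑ l, ‖h l‖ ^ 2 : ℝ) : ℂ)‖ ^ 2 +
        P * ∑ l, ‖((P : ℂ) * (∑ l, (starRingEnd ℂ) (h l) * a l) /
          ((1 + P * ∑ l, ‖h l‖ ^ 2 : ℝ) : ℂ)) * h l - a l‖ ^ 2 =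
      P * ((∑ l, ‖a l‖ ^ 2) -
        P * ‖∑ l, (starRingEnd ℂ) (h l) * a l‖ ^ 2 /
          (1 + P * ∑ l, ‖h l‖ ^ 2))) :=
  stmt_16_general L h a P hP
end

section
/- Let L ≥ 1, h, a ∈ ℂ^L, and P > 0 real. Then P · a^H (I + P·h h^H)^{−1} a = P(‖a‖² − P|h^H a|²/(1 + P‖h‖²)), where h^H a = Σ_l conj(h_l) a_l and h h^H is the L×L matrix with entries h_i conj(h_j). In particular, the effective noise variance σ_eff² = P(‖a‖² − P|h^H a|²/(1 + P‖h‖²)) of compute-and-forward equals the positive-definite quadratic form P·a^H (I + P·h h^H)^{−1} a, so maximizing the computation rate over a is equivalent to minimizing this quadratic form (a shortest vector problem). -/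
open Matrix

/-!
The matrix `I + P h hᴴ` is a rank-one perturbation of the identity, so the Sherman–Morrison
formula gives `(I + P h hᴴ)⁻¹ = I - P / (1 + P ‖h‖²) · h hᴴ`, because `(h hᴴ)² = ‖h‖² · h hᴴ`.
Evaluating the quadratic form `aᴴ (·) a` on the right, with `aᴴ (h hᴴ) a = |hᴴ a|²`, gives the
closed form.
-/

theorem vecMulVec_mul_self {n R : Type*} [Fintype n] [CommSemiring R] (u v : n → R) :
    vecMulVec u v * vecMulVec u v = (v ⬝ᵥ u) • vecMulVec u v := by
  rw [vecMulVec_mul_vecMulVec, vecMulVec_smul]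

theorem inv_one_add_smul_vecMulVec {n K : Type*} [Fintype n] [DecidableEq n] [Field K]
    (u v : n → K) (c : K) (hc : 1 + c * (v ⬝ᵥ u) ≠ 0) :
    (1 + c • vecMulVec u v)⁻¹ = 1 - (c / (1 + c * (v ⬝ᵥ u))) • vecMulVec u v := by
  refine inv_eq_right_inv ?_
  rw [add_mul, one_mul, mul_sub, mul_one, mul_smul_comm, smul_mul_assoc, smul_smul,
    vecMulVec_mul_self, smul_smul]
  match_scalars
  · ring
  · field_simp
    ring

section Quadratic

variable {n 𝕜 : Type*} [Fintype n] [RCLike 𝕜]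

theorem star_dotProduct_self_eq_sum_norm_sq (a : n → 𝕜) :
    star a ⬝ᵥ a = ((∑ l, ‖a l‖ ^ 2 : ℝ) : 𝕜) := by
  push_cast
  refine Finset.sum_congr rfl fun l _ => ?_
  rw [Pi.star_apply, RCLike.star_def, mul_comm, RCLike.mul_conj]

theorem star_dotProduct_vecMulVec_star_mulVec (h a : n → 𝕜) :
    star a ⬝ᵥ (vecMulVec h (star h) *ᵥ a) = ((‖star h ⬝ᵥ a‖ ^ 2 : ℝ) : 𝕜) := by
  rw [vecMulVec_mulVec, op_smul_eq_smul, dotProduct_smul, star_dotProduct (v := a), smul_eq_mul,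
    RCLike.star_def, RCLike.mul_conj, RCLike.ofReal_pow]

variable [DecidableEq n]

theorem star_dotProduct_inv_one_add_smul_vecMulVec_star_mulVec (h a : n → 𝕜) {P : ℝ}
    (hP : 0 ≤ P) :
    star a ⬝ᵥ ((1 + (P : 𝕜) • vecMulVec h (star h))⁻¹ *ᵥ a) =
      ((∑ l, ‖a l‖ ^ 2 - P * ‖star h ⬝ᵥ a‖ ^ 2 / (1 + P * ∑ l, ‖h l‖ ^ 2) : ℝ) : 𝕜) := by
  have hpos : 0 < 1 + P * ∑ l, ‖h l‖ ^ 2 := by positivity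
  have hne : 1 + (P : 𝕜) * (star h ⬝ᵥ h) ≠ 0 := by
    rw [star_dotProduct_self_eq_sum_norm_sq, ← RCLike.ofReal_mul, ← RCLike.ofReal_one,
      ← RCLike.ofReal_add, RCLike.ofReal_ne_zero]
    exact hpos.ne'
  rw [inv_one_add_smul_vecMulVec _ _ _ hne, sub_mulVec, one_mulVec, dotProduct_sub,
    smul_mulVec, dotProduct_smul, smul_eq_mul, star_dotProduct_self_eq_sum_norm_sq,
    star_dotProduct_self_eq_sum_norm_sq, star_dotProduct_vecMulVec_star_mulVec]
  push_cast
  ring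

end Quadratic

theorem stmt_18_general (L : ℕ) (h a : Fin L → ℂ) (P : ℝ) (hP : 0 < P) :
    (P : ℂ) * dotProduct (star a)
        ((((1 : Matrix (Fin L) (Fin L) ℂ) +
          (P : ℂ) • Matrix.of (fun i j => h i * (starRingEnd ℂ) (h j)))⁻¹).mulVec a) =
      ((P * ((∑ l, ‖a l‖ ^ 2) -
        P * ‖∑ l, (starRingEnd ℂ) (h l) * a l‖ ^ 2 /
          (1 + P * ∑ l, ‖h l‖ ^ 2)) : ℝ) : ℂ) := by
  rw [Complex.ofReal_mul]
  exact congrArg _ (star_dotProduct_inv_one_add_smul_vecMulVec_star_mulVec h a hP.le)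

/-- The effective noise variance of compute-and-forward as a quadratic form:
P·aᴴ(I + P·hhᴴ)⁻¹a = P(‖a‖² − P|hᴴa|²/(1 + P‖h‖²)). -/
theorem stmt_18 (L : ℕ) (hL : 1 ≤ L) (h a : Fin L → ℂ) (P : ℝ) (hP : 0 < P) :
    (P : ℂ) * dotProduct (star a)
        ((((1 : Matrix (Fin L) (Fin L) ℂ) +
          (P : ℂ) • Matrix.of (fun i j => h i * (starRingEnd ℂ) (h j)))⁻¹).mulVec a) =
      ((P * ((∑ l, ‖a l‖ ^ 2) -
        P * ‖∑ l, (starRingEnd ℂ) (h l) * a l‖ ^ 2 /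
          (1 + P * ∑ l, ‖h l‖ ^ 2)) : ℝ) : ℂ) :=
  stmt_18_general L h a P hP
end
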